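/- arXiv:2209.15245 — 2 statements merged into one kernel-verified Lean document; each statement's English description precedes it below -/
import Mathlib

section
/- Let B ≥ 2 and let w ∈ ℝ^B have nonnegative entries summing to 1 (a grouped label distribution). If some coordinate of w is zero (i.e., at least one class is missing from the grouped dataset), then Σ_{b=1}^B (w_b − 1/B)² > 1/B². -/
/-!
The missing class contributes exactly `(0 - 1/B)² = 1/B²`. The remaining terms cannot all
vanish: otherwise the other `B - 1` weights would all equal `1/B` and sum to `(B - 1)/B ≠ 1`.
-/

open Finset

theorem Finset.sum_sq_sub_pos_of_sum_ne {ι : Type*} {s : Finset ι} {x : ι → ℝ} {c : ℝ}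
    (h : ∑ i ∈ s, x i ≠ #s * c) : 0 < ∑ i ∈ s, (x i - c) ^ 2 := by
  refine (sum_nonneg fun i _ ↦ sq_nonneg (x i - c)).lt_of_ne fun hzero ↦ h ?_
  have hconst : ∀ i ∈ s, x i = c := fun i hi ↦ sub_eq_zero.mp <| pow_eq_zero_iff two_ne_zero |>.mp <|
    (sum_eq_zero_iff_of_nonneg fun i _ ↦ sq_nonneg (x i - c)).mp hzero.symm i hi
  rw [sum_congr rfl hconst, sum_const, nsmul_eq_mul]

theorem qcid_gt_of_missing_class_general (B : ℕ) (w : Fin B → ℝ)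
    (hsum : ∑ b, w b = 1)
    (b₀ : Fin B) (hb₀ : w b₀ = 0) :
    ∑ b, (w b - 1 / B) ^ 2 > 1 / (B : ℝ) ^ 2 := by
  have hB : (B : ℝ) ≠ 0 := Nat.cast_ne_zero.mpr b₀.pos.ne'
  have hrest : ∑ b ∈ univ.erase b₀, w b = 1 := by
    rw [← hsum, ← add_sum_erase _ _ (mem_univ b₀), hb₀, zero_add]
  have hcard : (#(univ.erase b₀) : ℝ) = B - 1 := by
    rw [card_erase_of_mem (mem_univ b₀), card_univ, Fintype.card_fin, Nat.cast_pred b₀.pos]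
  have hne : ∑ b ∈ univ.erase b₀, w b ≠ #(univ.erase b₀) * (1 / B) := by
    rw [hrest, hcard, sub_mul, mul_one_div_cancel hB, one_mul]
    exact fun h ↦ one_div_ne_zero hB (by linarith)
  have hpos := sum_sq_sub_pos_of_sum_ne hne
  rw [← add_sum_erase _ _ (mem_univ b₀), hb₀]
  have hterm : (0 - 1 / (B : ℝ)) ^ 2 = 1 / (B : ℝ) ^ 2 := by ring
  linarith

/-- If a class is missing from the grouped label distribution, then QCID > 1/B². -/
theorem qcid_gt_of_missing_class (B : ℕ) (hB : 2 ≤ B) (w : Fin B → ℝ)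
    (hw : ∀ b, 0 ≤ w b) (hsum : ∑ b, w b = 1)
    (b₀ : Fin B) (hb₀ : w b₀ = 0) :
    ∑ b, (w b - 1 / B) ^ 2 > 1 / (B : ℝ) ^ 2 :=
  qcid_gt_of_missing_class_general B w hsum b₀ hb₀
end

section
/- (Class-Imbalance Reduction, part 2.) Let x_1, …, x_{N̄} be positive real numbers that are not all equal, and let β' > β > 0. Then (Σ_{i=1}^{N̄} x_i · x_i^{−β'}) / (Σ_{i=1}^{N̄} x_i^{−β'}) < (Σ_{i=1}^{N̄} x_i · x_i^{−β}) / (Σ_{i=1}^{N̄} x_i^{−β}); that is, increasing the exponent β strictly decreases the expected QCID under the distribution that selects subset i with probability proportional to x_i^{−β}. -/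
/-!
Write `x i ^ (-β') = x i ^ (-β) * x i ^ (-(β' - β))`. With weights `w i = x i ^ (-β)`, the claim
becomes a strict weighted Chebyshev inequality for `x` and the strictly decreasing function
`t ↦ t ^ (-(β' - β))` of `x`: oppositely ordered sequences have weighted mean of the product
strictly below the product of the weighted means, unless one of them is constant.
-/

open Finset

section WeightedChebyshev

variable {ι R : Type*} [CommRing R] (s : Finset ι) (w f g : ι → R)

theorem two_mul_sum_mul_sum_sub_sum_mul_sum :
    2 * ((∑ i ∈ s, w i) * (∑ i ∈ s, w i * f i * g i)
        - (∑ i ∈ s, w i * f i) * (∑ i ∈ s, w i * g i))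
      = ∑ i ∈ s, ∑ j ∈ s, w i * w j * ((f i - f j) * (g i - g j)) := by
  have pointwise : ∀ i j, w i * w j * ((f i - f j) * (g i - g j))
      = w j * (w i * f i * g i) + w i * (w j * f j * g j)
        - w i * f i * (w j * g j) - w j * f j * (w i * g i) := fun i j => by ring
  simp only [pointwise, sum_add_distrib, sum_sub_distrib, ← mul_sum, ← sum_mul]
  ring

variable {s w f g} [LinearOrder R] [IsStrictOrderedRing R]

theorem sum_mul_sum_lt_of_strictAnti
    (hw : ∀ i ∈ s, 0 < w i) (hfg : ∀ i ∈ s, ∀ j ∈ s, f i < f j → g j < g i)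
    (hf : ∃ i ∈ s, ∃ j ∈ s, f i ≠ f j) :
    (∑ i ∈ s, w i) * (∑ i ∈ s, w i * f i * g i)
      < (∑ i ∈ s, w i * f i) * (∑ i ∈ s, w i * g i) := by
  have term_neg : ∀ i ∈ s, ∀ j ∈ s, f i ≠ f j →
      w i * w j * ((f i - f j) * (g i - g j)) < 0 := by
    intro i hi j hj hij
    refine mul_neg_of_pos_of_neg (mul_pos (hw i hi) (hw j hj)) ?_
    rcases hij.lt_or_gt with h | h
    · exact mul_neg_of_neg_of_pos (sub_neg.2 h) (sub_pos.2 (hfg i hi j hj h))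
    · exact mul_neg_of_pos_of_neg (sub_pos.2 h) (sub_neg.2 (hfg j hj i hi h))
  have double_sum_neg : ∑ i ∈ s, ∑ j ∈ s, w i * w j * ((f i - f j) * (g i - g j)) < 0 := by
    rw [← sum_product']
    obtain ⟨i₀, hi₀, j₀, hj₀, hij₀⟩ := hf
    refine sum_neg' (fun p hp => ?_) ⟨(i₀, j₀), mem_product.2 ⟨hi₀, hj₀⟩,
      term_neg i₀ hi₀ j₀ hj₀ hij₀⟩
    obtain ⟨hi, hj⟩ := mem_product.1 hp
    rcases eq_or_ne (f p.1) (f p.2) with h | h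
    · simp [h]
    · exact (term_neg _ hi _ hj h).le
  linarith [two_mul_sum_mul_sum_sub_sum_mul_sum s w f g]

end WeightedChebyshev

theorem expected_qcid_strict_anti_general (n : ℕ) (x : Fin n → ℝ) (β β' : ℝ)
    (hx : ∀ i, 0 < x i) (hββ' : β < β')
    (hne : ∃ i j, x i ≠ x j) :
    (∑ i, x i * x i ^ (-β')) / (∑ i, x i ^ (-β'))
      < (∑ i, x i * x i ^ (-β)) / (∑ i, x i ^ (-β)) := by
  obtain ⟨i₀, j₀, hij⟩ := hne
  have split : ∀ i, x i ^ (-β') = x i ^ (-β) * x i ^ (-(β' - β)) := fun i => by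
    rw [← Real.rpow_add (hx i)]; ring_nf
  have chebyshev := sum_mul_sum_lt_of_strictAnti (s := univ) (w := fun i => x i ^ (-β))
    (f := x) (g := fun i => x i ^ (-(β' - β)))
    (fun i _ => Real.rpow_pos_of_pos (hx i) _)
    (fun i _ j _ h => Real.rpow_lt_rpow_of_neg (hx i) h (by linarith))
    ⟨i₀, mem_univ _, j₀, mem_univ _, hij⟩
  have rpow_sum_pos : ∀ γ : ℝ, 0 < ∑ i, x i ^ γ := fun γ =>
    sum_pos (fun i _ => Real.rpow_pos_of_pos (hx i) _) ⟨i₀, mem_univ _⟩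
  rw [div_lt_div_iff₀ (rpow_sum_pos _) (rpow_sum_pos _)]
  simp only [split, ← mul_assoc]
  simp only [mul_comm (x _ ^ (-β)) (x _)] at chebyshev
  linarith

/-- Class-Imbalance Reduction (part 2): increasing the exponent β strictly
decreases the expected QCID under the x_i^{−β}-weighted distribution. -/
theorem expected_qcid_strict_anti (n : ℕ) (x : Fin n → ℝ) (β β' : ℝ)
    (hx : ∀ i, 0 < x i) (hβ : 0 < β) (hββ' : β < β')
    (hne : ∃ i j, x i ≠ x j) :
    (∑ i, x i * x i ^ (-β')) / (∑ i, x i ^ (-β'))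
      < (∑ i, x i * x i ^ (-β)) / (∑ i, x i ^ (-β)) :=
  expected_qcid_strict_anti_general n x β β' hx hββ' hne
end
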